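/- arXiv:1708.00997 — 3 statements merged into one kernel-verified Lean document; each statement's English description precedes it below -/
import Mathlib

section
/- Let C be a nonzero Delsarte rank-metric code in F_q^{n×m} with minimum rank distance d_r. Then d_r ≤ (mn - dim_{F_q}(C))/max{m,n} + 1 (the Singleton bound for the rank metric). -/
/-- If every nonzero element of `C` has rank at least `d`, and some nonzero element has
rank exactly `d`, then `d * m + dim C ≤ m * n + m`. -/
lemma delsarte_singleton_aux (n m : ℕ) (F : Type*) [Field F]
    (C : Submodule F (Matrix (Fin n) (Fin m) F)) (d : ℕ)
    (hd1 : ∃ A ∈ C, A ≠ 0 ∧ A.rank = d)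
    (hd2 : ∀ A ∈ C, A ≠ 0 → d ≤ A.rank) :
    d * m + Module.finrank F C ≤ m * n + m := by
  obtain ⟨A₀, hA₀C, hA₀ne, hA₀rank⟩ := hd1
  -- d ≤ n
  have hdn : d ≤ n := by
    have := A₀.rank_le_card_height
    simpa [hA₀rank] using this
  -- d ≥ 1
  have hd1' : 1 ≤ d := by
    by_contra h
    have hd0 : d = 0 := by omega
    apply hA₀ne
    have hr : Module.finrank F (LinearMap.range A₀.mulVecLin) = 0 := by
      rw [← Matrix.rank, hA₀rank, hd0]
    have hrange : LinearMap.range A₀.mulVecLin = ⊥ :=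
      Submodule.finrank_eq_zero.mp hr
    have hmv : ∀ x, A₀.mulVec x = 0 := by
      intro x
      have : A₀.mulVecLin x ∈ LinearMap.range A₀.mulVecLin := ⟨x, rfl⟩
      rw [hrange] at this
      simpa using this
    ext i j
    have := congrFun (hmv (Pi.single j 1)) i
    simpa using this
  set k := n - (d - 1) with hk
  have hkn : k ≤ n := Nat.sub_le _ _
  -- the projection onto the first k rows
  let φ : C →ₗ[F] Matrix (Fin k) (Fin m) F :=
    { toFun := fun A => (A : Matrix (Fin n) (Fin m) F).submatrix (Fin.castLE hkn) id
      map_add' := fun A B => by simp [Matrix.submatrix_add]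
      map_smul' := fun c A => by simp [Matrix.submatrix_smul] }
  have hφinj : Function.Injective φ := by
    rw [injective_iff_map_eq_zero]
    intro A hA0
    have hrow : ∀ (i : Fin k) (j : Fin m),
        (A : Matrix (Fin n) (Fin m) F) (Fin.castLE hkn i) j = 0 := by
      intro i j
      exact congrFun (congrFun hA0 i) j
    -- the projection onto first k coordinates
    set π : (Fin n → F) →ₗ[F] (Fin k → F) :=
      LinearMap.funLeft F F (Fin.castLE hkn) with hπ
    have hπsurj : Function.Surjective π :=
      LinearMap.funLeft_surjective_of_injective F F _ (Fin.castLE_injective hkn)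
    have hrange : LinearMap.range (A : Matrix (Fin n) (Fin m) F).mulVecLin ≤
        LinearMap.ker π := by
      rintro v ⟨x, rfl⟩
      ext i
      simp only [hπ, LinearMap.funLeft_apply, Matrix.mulVecLin_apply, Function.comp]
      show (A : Matrix (Fin n) (Fin m) F).mulVec x (Fin.castLE hkn i) = 0
      simp only [Matrix.mulVec, dotProduct]
      exact Finset.sum_eq_zero fun j _ => by simp [hrow i j]
    have hkerfin : Module.finrank F (LinearMap.ker π) = n - k := by
      have h1 := LinearMap.finrank_range_add_finrank_ker π
      have h2 : LinearMap.range π = ⊤ := LinearMap.range_eq_top.mpr hπsurj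
      rw [h2] at h1
      have h3 : Module.finrank F (⊤ : Submodule F (Fin k → F)) = k := by
        simp [Module.finrank_pi]
      have h4 : Module.finrank F (Fin n → F) = n := by simp [Module.finrank_pi]
      omega
    have hrank : (A : Matrix (Fin n) (Fin m) F).rank ≤ n - k := by
      rw [Matrix.rank, ← hkerfin]
      exact Submodule.finrank_mono hrange
    have hAz : (A : Matrix (Fin n) (Fin m) F) = 0 := by
      by_contra hne
      have := hd2 _ A.2 hne
      omega
    exact Subtype.ext hAz
  have hfin : Module.finrank F C ≤ k * m := by
    have := LinearMap.finrank_le_finrank_of_injective hφinj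
    calc Module.finrank F C ≤ Module.finrank F (Matrix (Fin k) (Fin m) F) := this
      _ = k * m := by simp [Module.finrank_matrix]
  have hdk : d + k = n + 1 := by omega
  calc d * m + Module.finrank F C ≤ d * m + k * m := by omega
    _ = (d + k) * m := (add_mul d k m).symm
    _ = (n + 1) * m := by rw [hdk]
    _ = m * n + m := by ring

/-- Singleton bound for the rank metric: if `C ⊆ F_q^{n×m}` is a nonzero
Delsarte code with minimum rank distance `d`, then
`d ≤ (mn - dim C)/max{m,n} + 1`, stated multiplicatively (without subtraction/division) as
`d * max m n + dim C ≤ m * n + max m n`. -/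
theorem delsarte_singleton_bound (q n m : ℕ) (F : Type*) [Field F] [Fintype F]
    (hq : Fintype.card F = q)
    (C : Submodule F (Matrix (Fin n) (Fin m) F)) (hC : C ≠ ⊥)
    (d : ℕ) (hd : IsLeast {r : ℕ | ∃ A ∈ C, A ≠ 0 ∧ A.rank = r} d) :
    d * max m n + Module.finrank F C ≤ m * n + max m n := by
  obtain ⟨hd1, hd2⟩ := hd
  have hd2' : ∀ A ∈ C, A ≠ 0 → d ≤ A.rank := fun A hA hAne =>
    hd2 ⟨A, hA, hAne, rfl⟩
  rcases le_total n m with h | h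
  · rw [max_eq_left h]
    exact delsarte_singleton_aux n m F C d hd1 hd2'
  · rw [max_eq_right h]
    -- transpose the code
    set e : Matrix (Fin n) (Fin m) F ≃ₗ[F] Matrix (Fin m) (Fin n) F :=
      Matrix.transposeLinearEquiv (Fin n) (Fin m) F F with he
    have heA : ∀ A : Matrix (Fin n) (Fin m) F, e A = A.transpose := fun A => rfl
    set C' : Submodule F (Matrix (Fin m) (Fin n) F) :=
      C.map (e : Matrix (Fin n) (Fin m) F →ₗ[F] Matrix (Fin m) (Fin n) F) with hC'
    have hfr : Module.finrank F C' = Module.finrank F C := LinearEquiv.finrank_map_eq e C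
    have h1 : ∃ B ∈ C', B ≠ 0 ∧ B.rank = d := by
      obtain ⟨A, hA, hAne, hArank⟩ := hd1
      refine ⟨A.transpose, ⟨A, hA, heA A⟩, fun hz => hAne (Matrix.transpose_injective (by simpa using hz)),
        by rw [Matrix.rank_transpose]; exact hArank⟩
    have h2 : ∀ B ∈ C', B ≠ 0 → d ≤ B.rank := by
      rintro B ⟨A, hA, rfl⟩ hBne
      have hAne : A ≠ 0 := by
        rintro rfl
        exact hBne (by simp)
      rw [show ((e : Matrix (Fin n) (Fin m) F →ₗ[F] Matrix (Fin m) (Fin n) F) A)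
          = A.transpose from rfl, Matrix.rank_transpose]
      exact hd2' A hA hAne
    have := delsarte_singleton_aux m n F C' d h1 h2
    calc d * n + Module.finrank F C
        = d * n + Module.finrank F C' := by rw [hfr]
      _ ≤ n * m + n := this
      _ = m * n + n := by ring
end

section
/- Let C be a linear code over a finite field F with generator matrix G (i.e., C is the row space of G, whose rows are linearly independent). Then C ∩ C^⊥ = {0} if and only if the matrix GG^T is nonsingular. -/
variable (F : Type*) [Field F] (n : ℕ)

/-- The Euclidean (dot product) bilinear form on `F^n`. -/
noncomputable def dotBilin : LinearMap.BilinForm F (Fin n → F) :=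
  LinearMap.mk₂ F (fun x y => dotProduct x y)
    (by intros; simp [add_dotProduct])
    (by intros; simp [smul_dotProduct])
    (by intros; simp [dotProduct_add])
    (by intros; simp [dotProduct_smul])

/-- The Euclidean dual code of `C ⊆ F^n`. -/
noncomputable def euclDual (C : Submodule F (Fin n → F)) : Submodule F (Fin n → F) :=
  (dotBilin F n).orthogonal C

/-- Massey's criterion: a linear code `C` with generator matrix `G`
(rows of `G` are linearly independent and span `C`) is LCD, i.e. `C ∩ C^⊥ = {0}`,
if and only if `G * Gᵀ` is nonsingular. -/
theorem lcd_iff_gram_nonsingular [Fintype F] (k : ℕ)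
    (G : Matrix (Fin k) (Fin n) F)
    (hind : LinearIndependent F (fun i : Fin k => G i))
    (C : Submodule F (Fin n → F))
    (hgen : C = Submodule.span F (Set.range (fun i : Fin k => G i))) :
    C ⊓ euclDual F n C = ⊥ ↔ IsUnit (G * G.transpose).det := by
  have hmemC : ∀ x, x ∈ C ↔ ∃ v : Fin k → F, Matrix.vecMul v G = x := by
    intro x
    rw [hgen, Submodule.mem_span_range_iff_exists_fun]
    constructor <;> rintro ⟨v, hv⟩ <;> refine ⟨v, ?_⟩ <;> rw [← hv] <;>
      · ext j
        simp [Matrix.vecMul, dotProduct, Finset.sum_apply]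
  have hdual : ∀ v : Fin k → F, (Matrix.vecMul v G ∈ euclDual F n C ↔
      (G * G.transpose).mulVec v = 0) := by
    intro v
    constructor
    · intro hx
      ext i
      have := hx (G i) (hgen ▸ Submodule.subset_span ⟨i, rfl⟩)
      simpa [LinearMap.BilinForm.IsOrtho, dotBilin, Matrix.mulVec, Matrix.mul_apply, dotProduct, Matrix.vecMul,
        Finset.mul_sum, Finset.sum_mul, mul_comm, mul_assoc, mul_left_comm,
        Finset.sum_comm (γ := Fin n)] using this
    · intro h0
      intro c hc
      rw [hgen, Submodule.mem_span_range_iff_exists_fun] at hc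
      obtain ⟨w, rfl⟩ := hc
      have hrow : ∀ i, (dotBilin F n) (G i) (Matrix.vecMul v G) = 0 := by
        intro i
        have := congrFun h0 i
        simpa [dotBilin, Matrix.mulVec, Matrix.mul_apply, dotProduct, Matrix.vecMul,
          Finset.mul_sum, Finset.sum_mul, mul_comm, mul_assoc, mul_left_comm,
          Finset.sum_comm (γ := Fin n)] using this
      show (dotBilin F n) (∑ i, w i • G i) (Matrix.vecMul v G) = 0
      simp only [map_sum, LinearMap.sum_apply, map_smul, LinearMap.smul_apply]
      simp [hrow]
  have hindv : ∀ v : Fin k → F, Matrix.vecMul v G = 0 → v = 0 := by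
    intro v hv
    have := Fintype.linearIndependent_iff.mp hind v ?_
    · exact funext this
    · rw [← hv]; ext j; simp [Matrix.vecMul, dotProduct, Finset.sum_apply]
  rw [← Matrix.isUnit_iff_isUnit_det, ← Matrix.mulVec_injective_iff_isUnit]
  constructor
  · intro h v w hvw
    have key : ∀ u : Fin k → F, (G * G.transpose).mulVec u = 0 → u = 0 := by
      intro u hu
      have hx : Matrix.vecMul u G ∈ C ⊓ euclDual F n C :=
        ⟨(hmemC _).mpr ⟨u, rfl⟩, (hdual u).mpr hu⟩
      rw [h, Submodule.mem_bot] at hx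
      exact hindv u hx
    have := key (v - w) (by rw [Matrix.mulVec_sub, hvw, sub_self])
    exact sub_eq_zero.mp this
  · intro h
    rw [Submodule.eq_bot_iff]
    rintro x ⟨hxC, hxD⟩
    obtain ⟨v, rfl⟩ := (hmemC x).mp hxC
    have h0 : (G * G.transpose).mulVec v = 0 := (hdual v).mp hxD
    have : v = 0 := h (by simpa using h0)
    simp [this]
end

section
/- Let g_1,...,g_n ∈ F_{q^m} be linearly independent over F_q with k ≤ n ≤ m, and let C be the F_{q^m}-linear code generated by the k×n Moore matrix M_k(g_1,...,g_n) with entries g_j^{q^{i-1}}. Then C is an MRD code with parameters [n, k, n-k+1]: its dimension is k and its minimum rank distance is n-k+1. -/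
variable (F K : Type*) [Field F] [Fintype F] [Field K] [Algebra F K]

/-- The rank of a vector `β ∈ K^n`: the `F`-dimension of the span of its coordinates. -/
noncomputable def vecRank (n : ℕ) (β : Fin n → K) : ℕ :=
  Module.finrank F (Submodule.span F (Set.range β))

/-- The `k×n` Moore matrix with `(i,j)` entry `g_j^{q^i}` (`0 ≤ i ≤ k-1`). -/
def mooreMatrix (q k n : ℕ) (g : Fin n → K) : Matrix (Fin k) (Fin n) K :=
  Matrix.of (fun i j => g j ^ q ^ (i : ℕ))

section Aux

variable {F K}

lemma qpow_add (q : ℕ) (hq : Fintype.card F = q) (i : ℕ) (x y : K) :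
    (x + y) ^ q ^ i = x ^ q ^ i + y ^ q ^ i := by
  let p := ringChar F
  haveI : CharP F p := ringChar.charP F
  have hp : p.Prime := CharP.char_is_prime F p
  haveI : Fact p.Prime := ⟨hp⟩
  haveI : CharP K p := charP_of_injective_algebraMap (algebraMap F K).injective p
  obtain ⟨s, -, hcard⟩ := FiniteField.card F p
  rw [← hq, hcard, ← pow_mul]
  exact add_pow_char_pow x y p _

lemma qpow_fixed (q : ℕ) (hq : Fintype.card F = q) (i : ℕ) (a : F) :
    a ^ q ^ i = a := by
  induction i with
  | zero => simp
  | succ i ih => rw [pow_succ, pow_mul, ih, ← hq, FiniteField.pow_card]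

lemma qpow_smul (q : ℕ) (hq : Fintype.card F = q) (i : ℕ) (a : F) (x : K) :
    (a • x) ^ q ^ i = a • x ^ q ^ i := by
  rw [Algebra.smul_def, mul_pow, ← map_pow, qpow_fixed q hq, Algebra.smul_def]

/-- The `F`-linear map `x ↦ ∑ cᵢ x^{q^i}` on `K`. -/
noncomputable def Lmap (q : ℕ) (hq : Fintype.card F = q) {k : ℕ} (c : Fin k → K) :
    K →ₗ[F] K where
  toFun x := ∑ i : Fin k, c i * x ^ q ^ (i : ℕ)
  map_add' x y := by
    simp only [qpow_add q hq, mul_add, Finset.sum_add_distrib]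
  map_smul' a x := by
    simp only [qpow_smul q hq, RingHom.id_apply, Finset.smul_sum, mul_smul_comm]

lemma Lmap_apply (q : ℕ) (hq : Fintype.card F = q) {k : ℕ} (c : Fin k → K) (x : K) :
    Lmap q hq c x = ∑ i : Fin k, c i * x ^ q ^ (i : ℕ) := rfl

/-- Key kernel bound: a nonzero `q`-polynomial with `k` coefficients has kernel of
`F`-dimension at most `k-1`. -/
lemma finrank_ker_Lmap_le (q : ℕ) (hq : Fintype.card F = q) {k : ℕ} (hk : 0 < k)
    [FiniteDimensional F K] {c : Fin k → K} (hc : c ≠ 0) :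
    Module.finrank F (LinearMap.ker (Lmap q hq c)) ≤ k - 1 := by
  classical
  have hq2 : 2 ≤ q := hq ▸ Fintype.one_lt_card
  by_contra hcon
  push_neg at hcon
  have hkrk : k ≤ Module.finrank F (LinearMap.ker (Lmap q hq c)) := by omega
  haveI : Finite K := Module.finite_of_finite F
  haveI : Fintype K := Fintype.ofFinite K
  haveI : Fintype (LinearMap.ker (Lmap q hq c)) := Fintype.ofFinite _
  -- the associated polynomial
  set P : Polynomial K := ∑ i : Fin k, Polynomial.C (c i) * Polynomial.X ^ q ^ (i : ℕ) with hP
  obtain ⟨i0, hi0⟩ : ∃ i, c i ≠ 0 := Function.ne_iff.mp hc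
  have hqinj : Function.Injective (fun a : ℕ => q ^ a) :=
    Nat.pow_right_injective hq2
  have hcoeff : P.coeff (q ^ (i0 : ℕ)) = c i0 := by
    rw [hP, Polynomial.finset_sum_coeff]
    rw [Finset.sum_eq_single i0]
    · simp
    · intro j _ hji
      simp only [Polynomial.coeff_C_mul, Polynomial.coeff_X_pow]
      rw [if_neg, mul_zero]
      intro h
      exact hji (Fin.ext (hqinj h.symm))
    · simp
  have hP0 : P ≠ 0 := fun h => hi0 (by rw [← hcoeff, h, Polynomial.coeff_zero])
  have hdeg : P.natDegree ≤ q ^ (k - 1) := by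
    apply Polynomial.natDegree_sum_le_of_forall_le
    intro j _
    refine le_trans (Polynomial.natDegree_C_mul_le _ _) ?_
    rw [Polynomial.natDegree_X_pow]
    exact Nat.pow_le_pow_right (by omega) (by omega)
  -- every element of the kernel is a root of P
  have hroot : ∀ x : K, x ∈ LinearMap.ker (Lmap q hq c) → x ∈ P.roots.toFinset := by
    intro x hx
    rw [Multiset.mem_toFinset, Polynomial.mem_roots hP0]
    show Polynomial.eval x P = 0
    rw [hP, Polynomial.eval_finset_sum]
    simp only [Polynomial.eval_mul, Polynomial.eval_C, Polynomial.eval_pow, Polynomial.eval_X]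
    exact hx
  have hinj : Function.Injective
      (fun x : LinearMap.ker (Lmap q hq c) => (⟨x.1, hroot x.1 x.2⟩ : P.roots.toFinset)) := by
    intro a b h
    rw [Subtype.mk.injEq] at h
    exact Subtype.ext h
  have hcardle : Fintype.card (LinearMap.ker (Lmap q hq c)) ≤ q ^ (k - 1) := by
    calc Fintype.card (LinearMap.ker (Lmap q hq c))
        ≤ Fintype.card P.roots.toFinset := Fintype.card_le_of_injective _ hinj
      _ = P.roots.toFinset.card := Fintype.card_coe _
      _ ≤ Multiset.card P.roots := Multiset.toFinset_card_le _
      _ ≤ P.natDegree := Polynomial.card_roots' P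
      _ ≤ q ^ (k - 1) := hdeg
  have hcardeq : Fintype.card (LinearMap.ker (Lmap q hq c)) =
      q ^ Module.finrank F (LinearMap.ker (Lmap q hq c)) := by
    have := Module.card_eq_pow_finrank (K := F) (V := LinearMap.ker (Lmap q hq c))
    rwa [hq] at this
  have h1 : q ^ k ≤ q ^ (k - 1) := by
    calc q ^ k ≤ q ^ Module.finrank F (LinearMap.ker (Lmap q hq c)) :=
          Nat.pow_le_pow_right (by omega) hkrk
      _ = Fintype.card (LinearMap.ker (Lmap q hq c)) := hcardeq.symm
      _ ≤ q ^ (k - 1) := hcardle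
  have h2 := Nat.pow_lt_pow_right (by omega : 1 < q) (by omega : k - 1 < k)
  omega

end Aux

/-- Gabidulin: if `g_1,…,g_n ∈ F_{q^m}` are linearly independent over `F_q`
and `k ≤ n ≤ m`, the code generated by the `k×n` Moore matrix is an MRD code with
parameters `[n, k, n-k+1]`: it has dimension `k` and minimum rank distance `n - k + 1`. -/
theorem moore_code_is_mrd (q m k n : ℕ) (hq : Fintype.card F = q)
    (hm : Module.finrank F K = m) (hk : 0 < k) (hkn : k ≤ n) (hnm : n ≤ m)
    (g : Fin n → K) (hind : LinearIndependent F g)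
    (C : Submodule K (Fin n → K))
    (hC : C = Submodule.span K (Set.range (fun i : Fin k => mooreMatrix K q k n g i))) :
    Module.finrank K C = k ∧
    IsLeast {r : ℕ | ∃ β ∈ C, β ≠ 0 ∧ vecRank F K n β = r} (n - k + 1) := by
  classical
  subst hC
  have hm0 : 0 < Module.finrank F K := by rw [hm]; omega
  haveI : FiniteDimensional F K := FiniteDimensional.of_finrank_pos hm0
  set row : Fin k → Fin n → K := fun i => mooreMatrix K q k n g i with hrow
  -- membership characterization
  have hmem : ∀ β : Fin n → K,
      β ∈ Submodule.span K (Set.range row) ↔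
        ∃ c : Fin k → K, β = fun j => Lmap q hq c (g j) := by
    intro β
    rw [Submodule.mem_span_range_iff_exists_fun]
    constructor
    · rintro ⟨c, rfl⟩
      refine ⟨c, ?_⟩
      funext j
      simp [Lmap_apply, hrow, mooreMatrix, Finset.sum_apply]
    · rintro ⟨c, rfl⟩
      refine ⟨c, ?_⟩
      funext j
      simp [Lmap_apply, hrow, mooreMatrix, Finset.sum_apply]
  -- the span of the g's
  set V : Submodule F K := Submodule.span F (Set.range g) with hV
  have hVrank : Module.finrank F V = n := by
    rw [hV, finrank_span_eq_card hind, Fintype.card_fin]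
  -- if c ≠ 0 the kernel cannot contain V
  have hker_not : ∀ c : Fin k → K, c ≠ 0 → ¬ V ≤ LinearMap.ker (Lmap q hq c) := by
    intro c hc hle
    have h1 : Module.finrank F V ≤ Module.finrank F (LinearMap.ker (Lmap q hq c)) :=
      Submodule.finrank_mono hle
    have h2 := finrank_ker_Lmap_le q hq hk hc
    rw [hVrank] at h1
    omega
  -- linear independence of the rows
  have hLI : LinearIndependent K row := by
    rw [Fintype.linearIndependent_iff]
    intro c hsum
    by_contra hcon
    push_neg at hcon
    obtain ⟨i0, hi0⟩ := hcon
    have hc : c ≠ 0 := fun h => hi0 (by rw [h]; rfl)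
    apply hker_not c hc
    rw [hV, Submodule.span_le]
    rintro x ⟨j, rfl⟩
    rw [SetLike.mem_coe, LinearMap.mem_ker, Lmap_apply]
    have := congrFun hsum j
    simpa [hrow, mooreMatrix, Finset.sum_apply] using this
  have hdim : Module.finrank K (Submodule.span K (Set.range row)) = k := by
    rw [finrank_span_eq_card hLI, Fintype.card_fin]
  -- rank-nullity for codewords
  have hsplit : ∀ c : Fin k → K,
      Module.finrank F (Submodule.span F (Set.range fun j => Lmap q hq c (g j)))
        + Module.finrank F (V ⊓ LinearMap.ker (Lmap q hq c) : Submodule F K) = n := by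
    intro c
    set f : V →ₗ[F] K := (Lmap q hq c).comp V.subtype with hf
    have hrange : Submodule.span F (Set.range fun j => Lmap q hq c (g j)) =
        LinearMap.range f := by
      rw [hf, LinearMap.range_comp, Submodule.range_subtype, hV, Submodule.map_span,
        ← Set.range_comp]
      rfl
    have hker : Module.finrank F (LinearMap.ker f) =
        Module.finrank F (V ⊓ LinearMap.ker (Lmap q hq c) : Submodule F K) := by
      rw [hf, LinearMap.ker_comp,
        LinearEquiv.finrank_eq (Submodule.equivMapOfInjective _ (Submodule.injective_subtype V) _),
        Submodule.map_comap_subtype]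
    rw [hrange, ← hker, LinearMap.finrank_range_add_finrank_ker f]
    exact hVrank
  have hkerle : ∀ c : Fin k → K, c ≠ 0 →
      Module.finrank F (V ⊓ LinearMap.ker (Lmap q hq c) : Submodule F K) ≤ k - 1 :=
    fun c hc => le_trans (Submodule.finrank_mono inf_le_right) (finrank_ker_Lmap_le q hq hk hc)
  refine ⟨hdim, ?_, ?_⟩
  · -- membership: construct a codeword of rank exactly n - k + 1
    have hkn' : k - 1 ≤ n := by omega
    set e : Fin (k - 1) → Fin n := fun j => Fin.castLE hkn' j with he
    -- find a nonzero c killing the first k-1 of the g's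
    set A : Matrix (Fin (k - 1)) (Fin k) K :=
      Matrix.of (fun j i => g (e j) ^ q ^ (i : ℕ)) with hA
    have hnotinj : ¬ Function.Injective A.mulVecLin := by
      intro h
      have := LinearMap.finrank_le_finrank_of_injective h
      rw [Module.finrank_fin_fun, Module.finrank_fin_fun] at this
      omega
    have hkerT : LinearMap.ker A.mulVecLin ≠ ⊥ :=
      fun h => hnotinj (LinearMap.ker_eq_bot.mp h)
    obtain ⟨c, hcker, hc⟩ := Submodule.exists_mem_ne_zero_of_ne_bot hkerT
    have hc0 : ∀ j : Fin (k - 1), Lmap q hq c (g (e j)) = 0 := by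
      intro j
      have h1 := congrFun (LinearMap.mem_ker.mp hcker) j
      rw [Lmap_apply]
      simp only [Matrix.mulVecLin_apply, Matrix.mulVec, dotProduct, hA,
        Matrix.of_apply, Pi.zero_apply] at h1
      rw [← h1]
      exact Finset.sum_congr rfl (fun i _ => mul_comm _ _)
    -- the first k of the g's span a k-dimensional space
    have hindk : LinearIndependent F (g ∘ Fin.castLE hkn) :=
      hind.comp _ (Fin.castLE_injective hkn)
    have hindk1 : LinearIndependent F (g ∘ e) :=
      hind.comp _ (Fin.castLE_injective hkn')
    -- nonzero at position k-1
    have hgk : Lmap q hq c (g ⟨k - 1, by omega⟩) ≠ 0 := by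
      intro h0
      have hle : Submodule.span F (Set.range (g ∘ Fin.castLE hkn)) ≤
          LinearMap.ker (Lmap q hq c) := by
        rw [Submodule.span_le]
        rintro x ⟨j, rfl⟩
        rw [SetLike.mem_coe, LinearMap.mem_ker]
        by_cases hj : (j : ℕ) < k - 1
        · have h2 := hc0 ⟨j, hj⟩
          have h3 : Fin.castLE hkn j = e ⟨j, hj⟩ := Fin.ext rfl
          rw [Function.comp_apply, h3]
          exact h2
        · have h3 : Fin.castLE hkn j = (⟨k - 1, by omega⟩ : Fin n) :=
            Fin.ext (by simp; omega)
          rw [Function.comp_apply, h3]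
          exact h0
      have h4 := Submodule.finrank_mono hle
      rw [finrank_span_eq_card hindk, Fintype.card_fin] at h4
      have h5 := finrank_ker_Lmap_le q hq hk hc
      omega
    refine ⟨fun j => Lmap q hq c (g j), (hmem _).mpr ⟨c, rfl⟩, ?_, ?_⟩
    · intro h
      exact hgk (congrFun h ⟨k - 1, by omega⟩)
    · -- the rank is exactly n - k + 1
      have hU : Submodule.span F (Set.range (g ∘ e)) ≤
          (V ⊓ LinearMap.ker (Lmap q hq c) : Submodule F K) := by
        apply le_inf
        · rw [hV]
          apply Submodule.span_mono
          rintro x ⟨j, rfl⟩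
          exact ⟨e j, rfl⟩
        · rw [Submodule.span_le]
          rintro x ⟨j, rfl⟩
          rw [SetLike.mem_coe, LinearMap.mem_ker]
          exact hc0 j
      have hge : k - 1 ≤
          Module.finrank F (V ⊓ LinearMap.ker (Lmap q hq c) : Submodule F K) := by
        have := Submodule.finrank_mono hU
        rwa [finrank_span_eq_card hindk1, Fintype.card_fin] at this
      have h6 := hsplit c
      have h7 := hkerle c hc
      unfold vecRank
      omega
  · -- lower bound
    rintro r ⟨β, hβmem, hβ0, rfl⟩
    obtain ⟨c, rfl⟩ := (hmem β).mp hβmem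
    have hc : c ≠ 0 := by
      rintro rfl
      apply hβ0
      funext j
      simp [Lmap_apply]
    have h6 := hsplit c
    have h7 := hkerle c hc
    unfold vecRank
    omega
end
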